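/- Let (R, 𝔪) be a local commutative artinian principal ideal ring, M a finitely generated R-module with Ann_R(M) = 𝔪^r where r ≥ 2, N an R-module isomorphic to R, and ⟨,⟩ : M × M → N a non-degenerate symmetric R-bilinear form. Let Sh(M) = M[𝔪^{r-1}]/𝔪^{r-1}M with its induced symmetric bilinear form, and let φ : M[𝔪^{r-1}] → Sh(M) be the canonical surjection. Let 𝔖₁ be the set of submodules L ⊆ M with 𝔪 L^⊥ ⊆ L ⊆ L^⊥ and L ⊆ M[𝔪^{r-1}], and let 𝔖₂ be the set of submodules L' ⊆ Sh(M) with 𝔪 L'^⊥ ⊆ L' ⊆ L'^⊥ (orthogonal complements in Sh(M) taken with respect to the induced form). Then the map ψ : 𝔖₁ → 𝔖₂, L ↦ φ(L), is surjective, and its restriction to the set of those L ∈ 𝔖₁ that also satisfy 𝔪^{r-1}M ⊆ L is a bijection onto 𝔖₂. -/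
import Mathlib


open Pointwise

/-- The orthogonal complement of a submodule with respect to a bilinear form. -/
def orth {R M N : Type*} [CommRing R] [AddCommGroup M] [Module R M]
    [AddCommGroup N] [Module R N] (B : M →ₗ[R] M →ₗ[R] N) (L : Submodule R M) :
    Submodule R M where
  carrier := {x | ∀ l ∈ L, B x l = 0}
  add_mem' := by
    intro a b ha hb l hl
    simp [ha l hl, hb l hl]
  zero_mem' := by intro l hl; simp
  smul_mem' := by
    intro c a ha l hl
    simp [ha l hl]

theorem mem_orth {R M N : Type*} [CommRing R] [AddCommGroup M] [Module R M]
    [AddCommGroup N] [Module R N] (B : M →ₗ[R] M →ₗ[R] N) (L : Submodule R M) (x : M) :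
    x ∈ orth B L ↔ ∀ l ∈ L, B x l = 0 := Iff.rfl

theorem orth_anti {R M N : Type*} [CommRing R] [AddCommGroup M] [Module R M]
    [AddCommGroup N] [Module R N] (B : M →ₗ[R] M →ₗ[R] N) {L L' : Submodule R M}
    (h : L ≤ L') : orth B L' ≤ orth B L := fun _ hx l hl => hx l (h hl)

/-- Let `(R, 𝔪)` be a local commutative artinian principal ideal ring, `M` a finitely
generated `R`-module with `Ann_R(M) = 𝔪^r`, `r ≥ 2`, `N ≅ R`, and `⟨,⟩ : M × M → N` a
non-degenerate symmetric bilinear form.  Let `Sh(M) = M[𝔪^(r-1)]/𝔪^(r-1)M` with its induced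
form, `φ` the canonical surjection, `𝔖₁` the set of submodules `L ⊆ M` with
`𝔪 L^⊥ ⊆ L ⊆ L^⊥` and `L ⊆ M[𝔪^(r-1)]`, and `𝔖₂` the set of submodules `L' ⊆ Sh(M)` with
`𝔪 L'^⊥ ⊆ L' ⊆ L'^⊥`.  Then `ψ : 𝔖₁ → 𝔖₂`, `L ↦ φ(L)`, is surjective, and its restriction
to those `L ∈ 𝔖₁` with `𝔪^(r-1)M ⊆ L` is a bijection onto `𝔖₂`. -/
theorem shaving_bijection (R M N : Type*) [CommRing R] [IsLocalRing R]
    [IsArtinianRing R] [IsPrincipalIdealRing R] [AddCommGroup M] [Module R M]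
    [Module.Finite R M] [AddCommGroup N] [Module R N] (e : N ≃ₗ[R] R)
    (r : ℕ) (hr : 2 ≤ r)
    (hAnn : Module.annihilator R M = IsLocalRing.maximalIdeal R ^ r)
    (B : M →ₗ[R] M →ₗ[R] N) (hB : ∀ x y, B x y = B y x) (hBnd : Function.Bijective B)
    (K : Submodule R M)
    (hK : K = Submodule.torsionBySet R M
      ((IsLocalRing.maximalIdeal R ^ (r - 1) : Ideal R) : Set R))
    (S : Submodule R K)
    (hS : S = (IsLocalRing.maximalIdeal R ^ (r - 1) • (⊤ : Submodule R M)).comap K.subtype)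
    (Bsh : (K ⧸ S) →ₗ[R] (K ⧸ S) →ₗ[R] N)
    (hBsh : ∀ x y : K, Bsh (S.mkQ x) (S.mkQ y) = B x y)
    (𝔖₁ : Set (Submodule R M))
    (h𝔖₁ : 𝔖₁ = {L | IsLocalRing.maximalIdeal R • orth B L ≤ L ∧ L ≤ orth B L ∧ L ≤ K})
    (𝔖₂ : Set (Submodule R (K ⧸ S)))
    (h𝔖₂ : 𝔖₂ = {L' | IsLocalRing.maximalIdeal R • orth Bsh L' ≤ L' ∧ L' ≤ orth Bsh L'})
    (ψ : Submodule R M → Submodule R (K ⧸ S))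
    (hψ : ∀ L, ψ L = Submodule.map S.mkQ (L.comap K.subtype)) :
    (∀ L ∈ 𝔖₁, ψ L ∈ 𝔖₂) ∧
      (∀ L' ∈ 𝔖₂, ∃ L ∈ 𝔖₁, ψ L = L') ∧
      (∀ L ∈ 𝔖₁, IsLocalRing.maximalIdeal R ^ (r - 1) • (⊤ : Submodule R M) ≤ L →
        ∀ L'' ∈ 𝔖₁, IsLocalRing.maximalIdeal R ^ (r - 1) • (⊤ : Submodule R M) ≤ L'' →
          ψ L = ψ L'' → L = L'') ∧
      (∀ L' ∈ 𝔖₂, ∃ L ∈ 𝔖₁,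
        IsLocalRing.maximalIdeal R ^ (r - 1) • (⊤ : Submodule R M) ≤ L ∧ ψ L = L') := by
  set I := IsLocalRing.maximalIdeal R with hI
  set T : Submodule R M := I ^ (r - 1) • (⊤ : Submodule R M) with hT
  -- 𝔪^r kills M
  have hkill : ∀ a ∈ I ^ r, ∀ m : M, a • m = 0 := by
    intro a ha m
    exact Module.mem_annihilator.mp (hAnn ▸ ha) m
  -- J^2 ≤ 𝔪^r
  have hJJ : I ^ (r - 1) * I ^ (r - 1) ≤ I ^ r := by
    rw [← pow_add]
    exact Ideal.pow_le_pow_right (by omega)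
  -- 𝔪^(r-1) kills T
  have hTkill : ∀ c ∈ I ^ (r - 1), ∀ n ∈ T, c • n = 0 := by
    intro c hc n hn
    refine Submodule.smul_induction_on hn ?_ ?_
    · intro b hb m _
      rw [smul_smul]
      exact hkill _ (hJJ (Ideal.mul_mem_mul hc hb)) m
    · intro y z hy hz
      rw [smul_add, hy, hz, add_zero]
  -- T ≤ K
  have hTK : T ≤ K := by
    intro x hx
    rw [hK, Submodule.mem_torsionBySet_iff]
    rintro ⟨a, ha⟩
    exact hTkill a ha x hx
  -- orth B T ≤ K
  have horthT : orth B T ≤ K := by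
    intro x hx
    rw [hK, Submodule.mem_torsionBySet_iff]
    rintro ⟨a, ha⟩
    have hz : B (a • x) = 0 := by
      ext m
      have : B x (a • m) = 0 := hx (a • m) (Submodule.smul_mem_smul ha trivial)
      simpa [map_smul, smul_comm] using this
    have := hBnd.injective (by rw [hz, map_zero] : B (a • x) = B 0)
    exact this
  -- membership in K from T
  have hKmem : ∀ l ∈ T, ∃ k : K, (k : M) = l := fun l hl => ⟨⟨l, hTK hl⟩, rfl⟩
  -- map K.subtype S = T
  have hST : Submodule.map K.subtype S = T := by
    rw [hS, Submodule.map_comap_subtype, inf_eq_right.mpr hTK]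
  -- pullback lemma
  have hpull : ∀ L : Submodule R M, L ≤ K →
      Submodule.comap S.mkQ (orth Bsh (ψ L)) = Submodule.comap K.subtype (orth B L) := by
    intro L hL
    ext k
    simp only [Submodule.mem_comap, mem_orth]
    constructor
    · intro h l hl
      have := h (S.mkQ ⟨l, hL hl⟩) (by
        rw [hψ]
        exact Submodule.mem_map_of_mem (by simpa using hl))
      rwa [hBsh] at this
    · intro h y hy
      rw [hψ] at hy
      obtain ⟨k', hk', rfl⟩ := hy
      rw [hBsh]
      exact h _ hk'
  -- orth of image
  have horthψ : ∀ L : Submodule R M, L ≤ K → orth Bsh (ψ L) = ψ (orth B L) := by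
    intro L hL
    conv_lhs => rw [← Submodule.map_comap_eq_of_surjective S.mkQ_surjective
      (orth Bsh (ψ L))]
    rw [hpull L hL, hψ]
  -- Part 1
  have part1 : ∀ L ∈ 𝔖₁, ψ L ∈ 𝔖₂ := by
    intro L hL
    rw [h𝔖₁] at hL
    obtain ⟨h1, h2, h3⟩ := hL
    rw [h𝔖₂]
    constructor
    · rw [horthψ L h3, hψ, hψ, ← Submodule.map_smul'']
      refine Submodule.map_mono ?_
      refine le_trans ?_ (Submodule.comap_mono h1)
      refine Submodule.smul_le.mpr fun a ha n hn => ?_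
      exact Submodule.mem_comap.mpr (by
        simpa using Submodule.smul_mem_smul ha (Submodule.mem_comap.mp hn))
    · rw [horthψ L h3, hψ, hψ]
      exact Submodule.map_mono (Submodule.comap_mono h2)
  -- Part 4 (implies 2)
  have part4 : ∀ L' ∈ 𝔖₂, ∃ L ∈ 𝔖₁, T ≤ L ∧ ψ L = L' := by
    intro L' hL'
    rw [h𝔖₂] at hL'
    obtain ⟨g1, g2⟩ := hL'
    set L : Submodule R M := Submodule.map K.subtype (Submodule.comap S.mkQ L') with hLdef
    have h3 : L ≤ K := Submodule.map_subtype_le _ _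
    have hTL : T ≤ L := by
      rw [← hST]
      refine Submodule.map_mono fun s hs => ?_
      show S.mkQ s ∈ L'
      rw [Submodule.mkQ_apply, (Submodule.Quotient.mk_eq_zero S).mpr hs]
      exact L'.zero_mem
    have hψL : ψ L = L' := by
      rw [hψ]
      show Submodule.map S.mkQ (Submodule.comap K.subtype
        (Submodule.map K.subtype (Submodule.comap S.mkQ L'))) = L'
      rw [Submodule.comap_map_eq_of_injective (Submodule.injective_subtype K),
        Submodule.map_comap_eq_of_surjective S.mkQ_surjective]
    have h2 : L ≤ orth B L := by
      rintro x ⟨k, hk, rfl⟩ l ⟨k', hk', rfl⟩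
      simp only [Submodule.coe_subtype]
      rw [← hBsh]
      exact g2 hk (S.mkQ k') hk'
    have h1 : I • orth B L ≤ L := by
      refine Submodule.smul_le.mpr fun a ha x hx => ?_
      have hxK : x ∈ K := horthT (orth_anti B hTL hx)
      have hk : (⟨x, hxK⟩ : K) ∈ Submodule.comap S.mkQ (orth Bsh (ψ L)) := by
        rw [hpull L h3]
        exact hx
      rw [hψL] at hk
      have : a • S.mkQ (⟨x, hxK⟩ : K) ∈ L' := g1 (Submodule.smul_mem_smul ha hk)
      rw [← map_smul] at this
      exact ⟨a • ⟨x, hxK⟩, this, rfl⟩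
    exact ⟨L, by rw [h𝔖₁]; exact ⟨h1, h2, h3⟩, hTL, hψL⟩
  -- Part 3: injectivity
  have part3 : ∀ L ∈ 𝔖₁, T ≤ L → ∀ L'' ∈ 𝔖₁, T ≤ L'' → ψ L = ψ L'' → L = L'' := by
    intro L hL hTL L'' hL'' hTL'' heq
    rw [h𝔖₁] at hL hL''
    have hSP : ∀ (Q : Submodule R M), T ≤ Q → S ≤ Submodule.comap K.subtype Q := by
      intro Q hQ
      rw [hS]
      exact Submodule.comap_mono hQ
    have hrec : ∀ (Q : Submodule R M), T ≤ Q →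
        Submodule.comap S.mkQ (Submodule.map S.mkQ (Submodule.comap K.subtype Q)) =
          Submodule.comap K.subtype Q := by
      intro Q hQ
      rw [Submodule.comap_map_eq, S.ker_mkQ, sup_eq_left.mpr (hSP Q hQ)]
    have h := congrArg (Submodule.comap S.mkQ) heq
    rw [hψ, hψ, hrec L hTL, hrec L'' hTL''] at h
    have h' := congrArg (Submodule.map K.subtype) h
    rwa [Submodule.map_comap_subtype, Submodule.map_comap_subtype,
      inf_eq_right.mpr hL.2.2, inf_eq_right.mpr hL''.2.2] at h'
  exact ⟨part1, fun L' h => by obtain ⟨L, a, _, c⟩ := part4 L' h; exact ⟨L, a, c⟩,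
    part3, part4⟩
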